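/- arXiv:math/0703620 — 4 statements merged into one kernel-verified Lean document; each statement's English description precedes it below -/
import Mathlib

section
/- Let 1 ≤ s ≤ n and let f_1,...,f_s be homogeneous polynomials with f_i ∈ K[x_i,...,x_n] and deg f_s > 0. Then as a K-vector space, the ideal I = (f_1 x_1, f_1 f_2 x_2, ..., f_1⋯f_{s-1} x_{s-1}, f_1⋯f_s) decomposes as the direct sum I = ⊕_{j=1}^{s-1} (f_1⋯f_j x_j)·K[x_j,...,x_n] ⊕ (f_1⋯f_s)·K[x_s,...,x_n]. -/
open MvPolynomial

noncomputable section

variable {K : Type*} [Field K] {n : ℕ}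

/-- Total degree of an exponent vector. -/
def expDeg {n : ℕ} (u : Fin n →₀ ℕ) : ℕ := u.sum fun _ e => e

/-- Binomial coefficient with integer upper argument (0 when negative). -/
def zchoose (x : ℤ) (k : ℕ) : ℕ := if 0 ≤ x then x.toNat.choose k else 0

/-- The critical function of type `a` (indexed so that `a i` is the paper's `a_{i+1}`):
`H(t) = Σ_{i=1}^{s} C(t - a_i + n - i, n - i)`. -/
def critFun (n : ℕ) {s : ℕ} (a : Fin s → ℕ) (t : ℕ) : ℕ :=
  ∑ i : Fin s, zchoose ((t : ℤ) - a i + ((n : ℤ) - (i.val + 1))) (n - (i.val + 1))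

/-- Hilbert function of an ideal: `H(I,t) = dim_K I_t`. -/
def hilb (I : Ideal (MvPolynomial (Fin n) K)) (t : ℕ) : ℕ :=
  Module.finrank K ↥(Submodule.restrictScalars K I ⊓ homogeneousSubmodule (Fin n) K t)

/-- A homogeneous ideal (contains all homogeneous components of its members). -/
def IsHomogeneousIdeal (I : Ideal (MvPolynomial (Fin n) K)) : Prop :=
  ∀ f ∈ I, ∀ m : ℕ, homogeneousComponent m f ∈ I

/-- A monomial ideal. -/
def IsMonomialIdeal (I : Ideal (MvPolynomial (Fin n) K)) : Prop :=
  ∀ f ∈ I, ∀ u ∈ f.support, monomial u (1 : K) ∈ I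

/-- The set of (exponent vectors of) minimal monomial generators of a monomial ideal. -/
def minGens (I : Ideal (MvPolynomial (Fin n) K)) : Set (Fin n →₀ ℕ) :=
  {u | monomial u (1 : K) ∈ I ∧ ∀ v, v ≤ u → v ≠ u → monomial v (1 : K) ∉ I}

/-- `u ≤ v` in the lexicographic order with `x_1 > x_2 > ⋯ > x_n`. -/
def lexLE {n : ℕ} (u v : Fin n →₀ ℕ) : Prop :=
  u = v ∨ ∃ i, u i < v i ∧ ∀ j, j < i → u j = v j

/-- A lexsegment ideal. -/
def IsLexIdeal {N : ℕ} (K : Type*) [Field K] (I : Ideal (MvPolynomial (Fin N) K)) : Prop :=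
  IsMonomialIdeal I ∧ ∀ u v : Fin N →₀ ℕ, monomial u (1 : K) ∈ I →
    expDeg v = expDeg u → lexLE u v → monomial v (1 : K) ∈ I

/-- A universal lexsegment ideal: lexsegment after adjoining any number of variables. -/
def IsUniversalLex (I : Ideal (MvPolynomial (Fin n) K)) : Prop :=
  ∀ m : ℕ, IsLexIdeal K (Ideal.map (rename (Fin.castAdd m) :
    MvPolynomial (Fin n) K →ₐ[K] MvPolynomial (Fin (n + m)) K) I)

/-- The lexsegment subspace of `A_d` spanned by the `m` largest monomials of degree `d`. -/
def lexSpace (K : Type*) [Field K] (n d m : ℕ) : Submodule K (MvPolynomial (Fin n) K) :=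
  Submodule.span K ((fun u => monomial u (1 : K)) ''
    {u : Fin n →₀ ℕ | expDeg u = d ∧ ({v : Fin n →₀ ℕ | expDeg v = d ∧ lexLE u v}.ncard ≤ m)})

/-- `V ⊆ A_d` is a Gotzmann space if `dim A_1·V = dim A_1·Lex(V)`. -/
def IsGotzmannSpace (d : ℕ) (V : Submodule K (MvPolynomial (Fin n) K)) : Prop :=
  Module.finrank K ↥(homogeneousSubmodule (Fin n) K 1 * V) =
    Module.finrank K ↥(homogeneousSubmodule (Fin n) K 1 * lexSpace K n d (Module.finrank K V))

/-- A Gotzmann ideal: homogeneous, with each graded component a Gotzmann space. -/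
def IsGotzmannIdeal (I : Ideal (MvPolynomial (Fin n) K)) : Prop :=
  IsHomogeneousIdeal I ∧ ∀ k : ℕ,
    IsGotzmannSpace k (Submodule.restrictScalars K I ⊓ homogeneousSubmodule (Fin n) K k)

/-- Generators of the canonical critical ideal (`j` is 0-based; the paper's index is `j+1`):
`canGen j = f_1 ⋯ f_{j+1} ⋅ x_{j+1}` for `j + 1 < s`, and `canGen (s-1) = f_1 ⋯ f_s`. -/
def canGen {s : ℕ} (h : s ≤ n) (f : Fin s → MvPolynomial (Fin n) K) (j : Fin s) :
    MvPolynomial (Fin n) K :=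
  (∏ i ∈ Finset.Iic j, f i) * (if (j : ℕ) + 1 < s then X (Fin.castLE h j) else 1)

/-- Canonical critical ideals. -/
def IsCanonicalCritical (I : Ideal (MvPolynomial (Fin n) K)) : Prop :=
  ∃ (s : ℕ) (_ : 1 ≤ s) (h : s ≤ n) (f : Fin s → MvPolynomial (Fin n) K) (d : Fin s → ℕ),
    (∀ i, (f i).IsHomogeneous (d i)) ∧
    (∀ i : Fin s, f i ∈ supported K {k : Fin n | (i : ℕ) ≤ (k : ℕ)}) ∧
    (∀ i : Fin s, (i : ℕ) = s - 1 → 0 < d i) ∧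
    I = Ideal.span (Set.range (canGen h f))

/-- Saturation of an ideal with respect to the irrelevant maximal ideal. -/
def satIdeal (I : Ideal (MvPolynomial (Fin n) K)) : Ideal (MvPolynomial (Fin n) K) :=
  ⨆ k : ℕ, Submodule.colon I (((Ideal.span (Set.range (X : Fin n → MvPolynomial (Fin n) K))) ^ k : Ideal (MvPolynomial (Fin n) K)) : Set (MvPolynomial (Fin n) K))

/-- `I : (x_1, …, x_n) = I`. -/
def IsSaturated (I : Ideal (MvPolynomial (Fin n) K)) : Prop :=
  ∀ f, (∀ i : Fin n, X i * f ∈ I) → f ∈ I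

/-- `m(u)`: the (1-based) index of the largest variable dividing `x^u` (0 for `u = 0`). -/
def maxIdx {n : ℕ} (u : Fin n →₀ ℕ) : ℕ := u.support.sup fun i => (i : ℕ) + 1

/-- A stable monomial ideal. -/
def IsStable (I : Ideal (MvPolynomial (Fin n) K)) : Prop :=
  ∀ u ∈ minGens I, ∀ j ∈ u.support, (∀ k ∈ u.support, k ≤ j) →
    ∀ i : Fin n, i < j →
      monomial (u - Finsupp.single j 1 + Finsupp.single i 1) (1 : K) ∈ I

/-- The linear substitution attached to a matrix. -/
def linSub (M : Matrix (Fin n) (Fin n) K) :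
    MvPolynomial (Fin n) K →ₐ[K] MvPolynomial (Fin n) K :=
  aeval fun i => ∑ j, M i j • X j

/-- `u < v` in the degree reverse lexicographic order with `x_1 > ⋯ > x_n`. -/
def drlLT {n : ℕ} (u v : Fin n →₀ ℕ) : Prop :=
  expDeg u < expDeg v ∨ (expDeg u = expDeg v ∧ ∃ j, v j < u j ∧ ∀ k, j < k → u k = v k)

def IsLeadExp (f : MvPolynomial (Fin n) K) (u : Fin n →₀ ℕ) : Prop :=
  u ∈ f.support ∧ ∀ v ∈ f.support, v ≠ u → drlLT v u

/-- Initial ideal with respect to the degree reverse lexicographic order. -/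
def initIdeal (I : Ideal (MvPolynomial (Fin n) K)) : Ideal (MvPolynomial (Fin n) K) :=
  Ideal.span ((fun u => monomial u (1 : K)) '' {u | ∃ f ∈ I, IsLeadExp f u})

/-- `J` is the (reverse lexicographic) generic initial ideal of `I`: for every coordinate
change in a nonempty Zariski-open subset of `GL_n`, the initial ideal of the transformed
ideal equals `J`. -/
def IsGin (I J : Ideal (MvPolynomial (Fin n) K)) : Prop :=
  ∃ p : MvPolynomial (Fin n × Fin n) K, p ≠ 0 ∧
    ∀ M : Matrix (Fin n) (Fin n) K, IsUnit M.det →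
      MvPolynomial.eval (fun ij => M ij.1 ij.2) p ≠ 0 →
        initIdeal (Ideal.map (linSub M) I) = J

/-- Greedy computation of the Macaulay minimal growth operation `a ↦ a^{MG(d)}`. -/
def mgAux : ℕ → ℕ → ℕ
  | 0, _ => 0
  | d+1, a =>
    if a = 0 then 0 else
      (sSup {y : ℕ | Nat.choose y (d+1) ≤ a} + 1).choose (d+1) +
        mgAux d (a - Nat.choose (sSup {y : ℕ | Nat.choose y (d+1) ≤ a}) (d+1))

/-- `a = Σ_{j=k}^d C(c j + j, j)` is the `d`-th Macaulay representation of `a`. -/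
def IsMacaulayRep (a d k : ℕ) (c : ℕ → ℕ) : Prop :=
  1 ≤ k ∧ k ≤ d ∧ (∀ j, k ≤ j → j < d → c j ≤ c (j + 1)) ∧
    a = ∑ j ∈ Finset.Icc k d, Nat.choose (c j + j) j

/-- `I` has a critical Hilbert function. -/
def HasCriticalHilb (I : Ideal (MvPolynomial (Fin n) K)) : Prop :=
  ∃ (s : ℕ) (_ : 1 ≤ s) (_ : s ≤ n) (a : Fin s → ℕ),
    Monotone a ∧ (∀ i, 0 < a i) ∧ ∀ t, hilb I t = critFun n a t

/-- A critical ideal: a homogeneous ideal with critical Hilbert function. -/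
def IsCriticalIdeal (I : Ideal (MvPolynomial (Fin n) K)) : Prop :=
  IsHomogeneousIdeal I ∧ HasCriticalHilb I

/-- A critical space: the degree-`d` component of some critical ideal. -/
def IsCriticalSpace (d : ℕ) (V : Submodule K (MvPolynomial (Fin n) K)) : Prop :=
  ∃ J : Ideal (MvPolynomial (Fin n) K), IsCriticalIdeal J ∧
    V = Submodule.restrictScalars K J ⊓ homogeneousSubmodule (Fin n) K d

/-- Segmentwise critical numerical function (`s 0 = 0 < s 1 < ⋯ < s L` are the finite
break points; the last segment `[s L, ∞)` plays the role of `s_ℓ = ∞`). -/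
def SegmentwiseCritical (n : ℕ) (H : ℕ → ℕ) : Prop :=
  ∃ (L : ℕ) (s : Fin (L + 1) → ℕ), s 0 = 0 ∧ StrictMono s ∧
    (∀ j : Fin L, ∃ (p : ℕ) (_ : 1 ≤ p) (_ : p ≤ n) (a : Fin p → ℕ),
      Monotone a ∧ (∀ i, 0 < a i) ∧
      ∀ t, s j.castSucc ≤ t → t ≤ s j.succ → H t = critFun n a t) ∧
    (∃ (p : ℕ) (_ : 1 ≤ p) (_ : p ≤ n) (a : Fin p → ℕ),
      Monotone a ∧ (∀ i, 0 < a i) ∧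
      ∀ t, s (Fin.last L) ≤ t → H t = critFun n a t) ∧
    (∀ j : Fin (L + 1), 0 < (j : ℕ) → mgAux (n - 1) (H (s j - 1)) = H (s j))

/-- `ℤ`-indexed graded component of an ideal (as a `K`-subspace). -/
def hcompZ (I : Ideal (MvPolynomial (Fin n) K)) (m : ℤ) : Submodule K (MvPolynomial (Fin n) K) :=
  if 0 ≤ m then Submodule.restrictScalars K I ⊓ homogeneousSubmodule (Fin n) K m.toNat else ⊥

lemma hcompZ_mul_X (I : Ideal (MvPolynomial (Fin n) K)) (k : Fin n) {m m' : ℤ}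
    (h : m + 1 = m') {f : MvPolynomial (Fin n) K} (hf : f ∈ hcompZ I m) :
    X k * f ∈ hcompZ I m' := by
  by_cases hm : 0 ≤ m
  · have hm' : 0 ≤ m' := by omega
    rw [hcompZ, if_pos hm] at hf
    rw [hcompZ, if_pos hm']
    obtain ⟨h1, h2⟩ := hf
    refine ⟨Ideal.mul_mem_left _ _ h1, ?_⟩
    rw [SetLike.mem_coe, mem_homogeneousSubmodule] at h2 ⊢
    have : m'.toNat = 1 + m.toNat := by omega
    rw [this]
    exact (isHomogeneous_X K k).mul h2
  · rw [hcompZ, if_neg hm, Submodule.mem_bot] at hf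
    subst hf
    simp

/-- Multiplication by `x_k` between graded components. -/
def mulXmap (I : Ideal (MvPolynomial (Fin n) K)) (k : Fin n) {m m' : ℤ} (h : m + 1 = m') :
    hcompZ I m →ₗ[K] hcompZ I m' :=
  LinearMap.codRestrict _ ((LinearMap.mulLeft K (X k)).comp (Submodule.subtype _))
    fun c => hcompZ_mul_X I k h c.2

/-- Internal degree-`j` part of the `i`-th term of the Koszul complex tensored with `I`. -/
abbrev KSp (I : Ideal (MvPolynomial (Fin n) K)) (i j : ℕ) : Type _ :=
  {S : Finset (Fin n) // S.card = i} → ↥(hcompZ I ((j : ℤ) - (i : ℤ)))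

def kdiffAux (I : Ideal (MvPolynomial (Fin n) K)) (i : ℕ) {m m' : ℤ} (h : m + 1 = m') :
    ({S : Finset (Fin n) // S.card = i + 1} → ↥(hcompZ I m)) →ₗ[K]
      ({S : Finset (Fin n) // S.card = i} → ↥(hcompZ I m')) :=
  LinearMap.pi fun S => ∑ k : Fin n,
    if hk : k ∈ S.1 then 0 else
      ((-1 : K) ^ ((S.1.filter (fun a => a < k)).card)) •
        ((mulXmap I k h).comp
          (LinearMap.proj (⟨insert k S.1, by
            rw [Finset.card_insert_of_notMem hk, S.2]⟩ :
              {T : Finset (Fin n) // T.card = i + 1})))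

/-- Koszul differential `K_{i+1} → K_i` in internal degree `j`. -/
def kdiff (I : Ideal (MvPolynomial (Fin n) K)) (i j : ℕ) :
    KSp I (i + 1) j →ₗ[K] KSp I i j :=
  kdiffAux I i (m := (j : ℤ) - ((i : ℕ) + 1 : ℕ)) (m' := (j : ℤ) - (i : ℕ)) (by push_cast; ring)

/-- Graded Betti numbers `β_{i,j}(I) = dim_K Tor_i(I,K)_j`, computed via the Koszul complex. -/
def betti (I : Ideal (MvPolynomial (Fin n) K)) : ℕ → ℕ → ℕ
  | 0, j => Module.finrank K (KSp I 0 j) - Module.finrank K ↥(LinearMap.range (kdiff I 0 j))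
  | i+1, j => Module.finrank K ↥(LinearMap.ker (kdiff I i j)) -
      Module.finrank K ↥(LinearMap.range (kdiff I (i + 1) j))

/-- Castelnuovo–Mumford regularity: `max {j : β_{i,i+j}(I) ≠ 0 for some i}`. -/
def reg (I : Ideal (MvPolynomial (Fin n) K)) : ℕ :=
  sSup {r : ℕ | ∃ i, betti I i (i + r) ≠ 0}

/-- `I` has a `d`-linear resolution: generated in degree `d` with regularity `d`. -/
def HasLinearRes (d : ℕ) (I : Ideal (MvPolynomial (Fin n) K)) : Prop :=
  I = Ideal.span ((Submodule.restrictScalars K I ⊓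
      homogeneousSubmodule (Fin n) K d : Submodule K (MvPolynomial (Fin n) K)) : Set _) ∧
    reg I = d

/-!
Write `P_j = f_1 ⋯ f_j` and `V_j = canGen j · K[x_j, …, x_n]`. The sum of the `V_j` is an ideal
because it is stable under each variable: `x_i` keeps `V_j` in itself for `i ≥ j`, and for `i < j`
the identity `x_i · P_j x_j = (P_i x_i) · (f_{i+1} ⋯ f_j x_j)` moves `V_j` into `V_i`.
For independence, take a relation `∑ v_j = 0` with `v_j ∈ V_j` and the least `j` with `v_j ≠ 0`.
Cancelling `P_j` leaves `x_j g_j` equal to a polynomial in `x_{j+1}, …, x_n`, forcing `g_j = 0`;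
for the last index `v_j` is the only term left.
-/

namespace MvPolynomial

theorem eq_zero_of_X_mul_mem_supported {σ R : Type*} [CommSemiring R] {S : Set σ} {i : σ}
    (hi : i ∉ S) {p : MvPolynomial σ R} (hp : X i * p ∈ supported R S) : p = 0 := by
  classical
  by_contra hp0
  obtain ⟨u, hu⟩ := ne_zero_iff.mp hp0
  refine hi (mem_supported.mp hp (Finset.mem_coe.mpr (mem_vars_iff_mem_support i |>.mpr ?_)))
  refine ⟨Finsupp.single i 1 + u, by rwa [mem_support_iff, coeff_X_mul], ?_⟩
  simp [Finsupp.mem_support_iff]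

theorem mul_mem_of_forall_X_mul_mem {σ R : Type*} [CommSemiring R]
    (W : Submodule R (MvPolynomial σ R)) (hW : ∀ i, ∀ p ∈ W, X i * p ∈ W)
    (q : MvPolynomial σ R) {p : MvPolynomial σ R} (hp : p ∈ W) : q * p ∈ W := by
  induction q using MvPolynomial.induction_on generalizing p with
  | C a => rw [C_mul']; exact W.smul_mem a hp
  | add q r hq hr => rw [add_mul]; exact add_mem (hq hp) (hr hp)
  | mul_X q i ih => rw [mul_assoc]; exact ih (hW i p hp)

end MvPolynomial

namespace CanonicalCritical

variable {s : ℕ} (h : s ≤ n) (f : Fin s → MvPolynomial (Fin n) K)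

def summand (j : Fin s) : Submodule K (MvPolynomial (Fin n) K) :=
  Submodule.map (LinearMap.mulLeft K (canGen h f j))
    (Subalgebra.toSubmodule (supported K {k : Fin n | (j : ℕ) ≤ (k : ℕ)}))

def cofactor (j k : Fin s) : MvPolynomial (Fin n) K :=
  (∏ l ∈ Finset.Ioc j k, f l) * (if (k : ℕ) + 1 < s then X (Fin.castLE h k) else 1)

theorem canGen_eq_prod_mul_cofactor {j k : Fin s} (hjk : j ≤ k) :
    canGen h f k = (∏ l ∈ Finset.Iic j, f l) * cofactor h f j k := by
  rw [canGen, cofactor, ← mul_assoc, ← Finset.prod_union (Finset.Iic_disjoint_Ioc le_rfl),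
    Finset.Iic_union_Ioc_eq_Iic hjk]

theorem X_mul_canGen {i j : Fin s} (hij : i < j) :
    X (Fin.castLE h i) * canGen h f j = canGen h f i * cofactor h f i j := by
  rw [canGen_eq_prod_mul_cofactor h f hij.le, canGen, if_pos (by omega)]
  ring

variable {f}

theorem cofactor_mem_supported
    (hsupp : ∀ i : Fin s, f i ∈ supported K {k : Fin n | (i : ℕ) ≤ (k : ℕ)})
    {i j : Fin s} (hij : i < j) :
    cofactor h f i j ∈ supported K {k : Fin n | (i : ℕ) < (k : ℕ)} := by
  refine Subalgebra.mul_mem _ (Subalgebra.prod_mem _ fun l hl => ?_) ?_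
  · refine supported_mono ?_ (hsupp l)
    intro k (hk : (l : ℕ) ≤ k)
    exact Nat.lt_of_lt_of_le (Finset.mem_Ioc.mp hl).1 hk
  · split_ifs
    · exact X_mem_supported.mpr hij
    · exact one_mem _

theorem mem_summand_iff {j : Fin s} {p : MvPolynomial (Fin n) K} :
    p ∈ summand h f j ↔
      ∃ g ∈ supported K {k : Fin n | (j : ℕ) ≤ (k : ℕ)}, canGen h f j * g = p :=
  Submodule.mem_map

theorem summand_eq_zero_of_sum_eq_zero
    (hsupp : ∀ i : Fin s, f i ∈ supported K {k : Fin n | (i : ℕ) ≤ (k : ℕ)})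
    {v : Fin s → MvPolynomial (Fin n) K} (hv : ∀ k, v k ∈ summand h f k) (hsum : ∑ k, v k = 0)
    (j : Fin s) (hbelow : ∀ k < j, v k = 0) : v j = 0 := by
  have htail : ∑ k ∈ Finset.Ici j, v k = 0 := by
    rw [← hsum]
    refine Finset.sum_subset (Finset.subset_univ _) fun k _ hk => hbelow k ?_
    simpa using hk
  rw [Finset.Ici_eq_cons_Ioi, Finset.sum_cons] at htail
  by_cases hj : (j : ℕ) + 1 < s
  · choose g hg hvg using fun k => (mem_summand_iff h).mp (hv k)
    set P := ∏ l ∈ Finset.Iic j, f l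
    set R := ∑ k ∈ Finset.Ioi j, cofactor h f j k * g k
    have hvj : v j = P * (X (Fin.castLE h j) * g j) := by
      rw [← hvg, canGen, if_pos hj, mul_assoc]
    have hfactor : v j + ∑ k ∈ Finset.Ioi j, v k = P * (X (Fin.castLE h j) * g j + R) := by
      rw [hvj, mul_add, Finset.mul_sum]
      refine congrArg _ (Finset.sum_congr rfl fun k hk => ?_)
      rw [← hvg, canGen_eq_prod_mul_cofactor h f (Finset.mem_Ioi.mp hk).le, mul_assoc]
    rcases mul_eq_zero.mp (hfactor ▸ htail) with hP | hrel
    · rw [hvj, hP, zero_mul]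
    · have hR : R ∈ supported K {k : Fin n | (j : ℕ) < (k : ℕ)} := by
        refine Subalgebra.sum_mem _ fun k hk => Subalgebra.mul_mem _
          (cofactor_mem_supported h hsupp (Finset.mem_Ioi.mp hk)) (supported_mono ?_ (hg k))
        have hjk : j < k := Finset.mem_Ioi.mp hk
        intro l (hl : (k : ℕ) ≤ l)
        exact Nat.lt_of_lt_of_le hjk hl
      have hXg : X (Fin.castLE h j) * g j ∈ supported K {k : Fin n | (j : ℕ) < (k : ℕ)} := by
        rw [eq_neg_of_add_eq_zero_left hrel]
        exact neg_mem hR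
      rw [hvj, eq_zero_of_X_mul_mem_supported (by simp) hXg, mul_zero, mul_zero]
  · have hlast : Finset.Ioi j = ∅ :=
      Finset.eq_empty_of_forall_notMem fun k hk => by
        have hjk : j < k := Finset.mem_Ioi.mp hk
        omega
    simpa [hlast] using htail

theorem forall_summand_eq_zero_of_sum_eq_zero
    (hsupp : ∀ i : Fin s, f i ∈ supported K {k : Fin n | (i : ℕ) ≤ (k : ℕ)})
    {v : Fin s → MvPolynomial (Fin n) K} (hv : ∀ k, v k ∈ summand h f k) (hsum : ∑ k, v k = 0)
    (j : Fin s) : v j = 0 := by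
  induction j using WellFoundedLT.induction with
  | _ j ih => exact summand_eq_zero_of_sum_eq_zero h hsupp hv hsum j ih

theorem iSupIndep_summand
    (hsupp : ∀ i : Fin s, f i ∈ supported K {k : Fin n | (i : ℕ) ≤ (k : ℕ)}) :
    iSupIndep (summand h f) := by
  classical
  refine (iSupIndep_iff_finsetSum_eq_zero_imp_eq_zero _).mpr fun t v hv hsum j hj => ?_
  have := forall_summand_eq_zero_of_sum_eq_zero h hsupp (v := fun k => if k ∈ t then v k else 0)
    (fun k => by split_ifs with hk; exacts [hv k hk, zero_mem _])
    (by rwa [Finset.sum_ite_mem, Finset.univ_inter]) j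
  simpa [hj] using this

theorem X_mul_mem_iSup_summand_of_mem
    (hsupp : ∀ i : Fin s, f i ∈ supported K {k : Fin n | (i : ℕ) ≤ (k : ℕ)})
    (i : Fin n) {j : Fin s} {p : MvPolynomial (Fin n) K} (hp : p ∈ summand h f j) :
    X i * p ∈ ⨆ k, summand h f k := by
  obtain ⟨g, hg, rfl⟩ := (mem_summand_iff h).mp hp
  by_cases hji : (j : ℕ) ≤ i
  · refine Submodule.mem_iSup_of_mem j ((mem_summand_iff h).mpr ⟨X i * g, ?_, by ring⟩)
    exact Subalgebra.mul_mem _ (X_mem_supported.mpr hji) hg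
  · set i' : Fin s := ⟨i, by omega⟩
    have hij : i' < j := Fin.lt_def.mpr (by simp [i']; omega)
    refine Submodule.mem_iSup_of_mem i'
      ((mem_summand_iff h).mpr ⟨cofactor h f i' j * g, Subalgebra.mul_mem _ ?_ ?_, ?_⟩)
    · refine supported_mono ?_ (cofactor_mem_supported h hsupp hij)
      exact fun l (hl : (i' : ℕ) < l) => le_of_lt hl
    · refine supported_mono ?_ hg
      exact fun l (hl : (j : ℕ) ≤ l) => show (i' : ℕ) ≤ l from Nat.le_trans (Nat.le_of_lt hij) hl
    · rw [← mul_assoc, ← X_mul_canGen h f hij, mul_assoc]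
      rfl

theorem X_mul_mem_iSup_summand
    (hsupp : ∀ i : Fin s, f i ∈ supported K {k : Fin n | (i : ℕ) ≤ (k : ℕ)})
    (i : Fin n) {p : MvPolynomial (Fin n) K} (hp : p ∈ ⨆ j, summand h f j) :
    X i * p ∈ ⨆ j, summand h f j := by
  refine Submodule.iSup_induction _ (motive := fun p => X i * p ∈ ⨆ j, summand h f j) hp
    (fun j p hp => X_mul_mem_iSup_summand_of_mem h hsupp i hp) (by simp) fun p q hp hq => ?_
  rw [mul_add]
  exact add_mem hp hq

theorem span_canGen_eq_iSup_summand
    (hsupp : ∀ i : Fin s, f i ∈ supported K {k : Fin n | (i : ℕ) ≤ (k : ℕ)}) :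
    Submodule.restrictScalars K (Ideal.span (Set.range (canGen h f))) = ⨆ j, summand h f j := by
  refine le_antisymm (fun p hp => ?_) (iSup_le fun j p hp => ?_)
  · induction hp using Submodule.span_induction with
    | mem p hp =>
      obtain ⟨j, rfl⟩ := hp
      exact Submodule.mem_iSup_of_mem j ((mem_summand_iff h).mpr ⟨1, one_mem _, mul_one _⟩)
    | zero => exact zero_mem _
    | add p q _ _ hp hq => exact add_mem hp hq
    | smul a p _ hp =>
      exact mul_mem_of_forall_X_mul_mem _ (fun i _ => X_mul_mem_iSup_summand h hsupp i) a hp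
  · obtain ⟨g, -, rfl⟩ := (mem_summand_iff h).mp hp
    exact Ideal.mul_mem_right g _ (Ideal.subset_span (Set.mem_range_self j))

end CanonicalCritical

theorem stmt1_general {K : Type*} [Field K] {n s : ℕ} (h : s ≤ n)
    (f : Fin s → MvPolynomial (Fin n) K)
    (hsupp : ∀ i : Fin s, f i ∈ supported K {k : Fin n | (i : ℕ) ≤ (k : ℕ)}) :
    iSupIndep (fun j : Fin s => Submodule.map (LinearMap.mulLeft K (canGen h f j))
      (Subalgebra.toSubmodule (supported K {k : Fin n | (j : ℕ) ≤ (k : ℕ)}))) ∧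
    Submodule.restrictScalars K (Ideal.span (Set.range (canGen h f))) =
      ⨆ j : Fin s, Submodule.map (LinearMap.mulLeft K (canGen h f j))
        (Subalgebra.toSubmodule (supported K {k : Fin n | (j : ℕ) ≤ (k : ℕ)})) :=
  ⟨CanonicalCritical.iSupIndep_summand h hsupp,
    CanonicalCritical.span_canGen_eq_iSup_summand h hsupp⟩

/-- Lemma 2.2: the canonical critical ideal is, as a `K`-vector space,
the direct sum `⊕_{j=1}^{s-1} (f_1⋯f_j x_j)K[x_j,…,x_n] ⊕ (f_1⋯f_s)K[x_s,…,x_n]`. -/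
theorem stmt1 {K : Type*} [Field K] {n s : ℕ} (hs1 : 1 ≤ s) (h : s ≤ n)
    (f : Fin s → MvPolynomial (Fin n) K) (d : Fin s → ℕ)
    (hhom : ∀ i, (f i).IsHomogeneous (d i))
    (hsupp : ∀ i : Fin s, f i ∈ supported K {k : Fin n | (i : ℕ) ≤ (k : ℕ)})
    (hlast : ∀ i : Fin s, (i : ℕ) = s - 1 → 0 < d i) :
    iSupIndep (fun j : Fin s => Submodule.map (LinearMap.mulLeft K (canGen h f j))
      (Subalgebra.toSubmodule (supported K {k : Fin n | (j : ℕ) ≤ (k : ℕ)}))) ∧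
    Submodule.restrictScalars K (Ideal.span (Set.range (canGen h f))) =
      ⨆ j : Fin s, Submodule.map (LinearMap.mulLeft K (canGen h f j))
        (Subalgebra.toSubmodule (supported K {k : Fin n | (j : ℕ) ≤ (k : ℕ)})) :=
  stmt1_general h f hsupp
end
end

section
/- Let I be a stable monomial ideal of A = K[x_1,...,x_n]. Then every monomial v ∈ I can be written uniquely as v = u·w where u ∈ G(I) and w is a monomial in K[x_{m(u)},...,x_n]; equivalently, I = ⊕_{u ∈ G(I)} u·K[x_{m(u)},...,x_n] as K-vector spaces. -/
open MvPolynomial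

noncomputable section

variable {K : Type*} [Field K] {n : ℕ}

/-!
Weight an exponent vector by `i + 1` at the variable `x_{i+1}`. Among the monomials of `I` dividing
`v`, one of least weight is a minimal generator `u`; if `v / u` involved some `x_i` with
`i < m(u)`, stability would put `x_i u / x_{m(u)}`, a divisor of `v` of smaller weight, into `I`.
For uniqueness, a factorization `v = u w` with `w ∈ K[x_{m(u)}, …, x_n]` forces `u` to agree with
`v` below `x_{m(u)}` and to vanish above it, so two such generators are comparable under
divisibility, hence equal.
-/

open Finsupp

theorem Finsupp.weight_lt_weight_of_lt {σ : Type*} {w : σ → ℕ} (hw : ∀ s, w s ≠ 0)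
    {a b : σ →₀ ℕ} (h : a < b) : weight w a < weight w b := by
  obtain ⟨s, hs⟩ : ∃ s, (b - a) s ≠ 0 := by
    by_contra! hc
    exact h.ne (le_antisymm h.le fun s => by simpa [Nat.sub_eq_zero_iff_le] using hc s)
  have hpos : 0 < weight w (b - a) :=
    lt_of_lt_of_le (Nat.pos_of_ne_zero (hw s)) (le_weight_of_ne_zero' w hs)
  calc weight w a < weight w a + weight w (b - a) := by omega
    _ = weight w b := by rw [← map_add, add_tsub_cancel_of_le h.le]

lemma exists_top_of_lt_maxIdx {u : Fin n →₀ ℕ} {i : Fin n} (h : (i : ℕ) + 1 < maxIdx u) :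
    ∃ j ∈ u.support, (∀ k ∈ u.support, k ≤ j) ∧ i < j := by
  have hne : u.support.Nonempty := Finset.nonempty_iff_ne_empty.mpr fun he => by
    simp [maxIdx, he] at h
  obtain ⟨j, hj, hsup⟩ := u.support.exists_mem_eq_sup hne fun k : Fin n => (k : ℕ) + 1
  have hle : ∀ k ∈ u.support, (k : ℕ) + 1 ≤ (j : ℕ) + 1 := fun k hk =>
    hsup ▸ Finset.le_sup (f := fun k : Fin n => (k : ℕ) + 1) hk
  refine ⟨j, hj, fun k hk => Fin.le_def.mpr (by have := hle k hk; omega), ?_⟩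
  rw [Fin.lt_def]
  unfold maxIdx at h
  omega

lemma apply_eq_zero_of_maxIdx_lt {u : Fin n →₀ ℕ} {j : Fin n}
    (hj : maxIdx u < (j : ℕ) + 1) : u j = 0 := by
  by_contra hu
  have : (j : ℕ) + 1 ≤ maxIdx u :=
    Finset.le_sup (f := fun i : Fin n => (i : ℕ) + 1) (mem_support_iff.mpr hu)
  omega

lemma sub_single_add_single_le {σ : Type*} {u v : σ →₀ ℕ} {i j : σ} (hij : i ≠ j)
    (huv : u ≤ v) (hi : u i < v i) : u - single j 1 + single i 1 ≤ v := by
  classical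
  intro k
  have := huv k
  simp only [Finsupp.coe_add, coe_tsub, Pi.add_apply, Pi.sub_apply, single_apply]
  split_ifs <;> subst_vars <;> omega

lemma eq_of_le_of_mem_minGens {I : Ideal (MvPolynomial (Fin n) K)}
    {u₁ u₂ : Fin n →₀ ℕ} (hu₁ : u₁ ∈ minGens I) (hu₂ : u₂ ∈ minGens I) (h : u₁ ≤ u₂) :
    u₁ = u₂ := by
  by_contra hne
  exact hu₂.2 u₁ h hne hu₁.1

theorem exists_minGens_factor_of_isStable {I : Ideal (MvPolynomial (Fin n) K)}
    (hst : IsStable I) {v : Fin n →₀ ℕ} (hv : monomial v (1 : K) ∈ I) :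
    ∃ u ∈ minGens I, u ≤ v ∧ ∀ i ∈ (v - u).support, maxIdx u ≤ (i : ℕ) + 1 := by
  set w : Fin n → ℕ := fun i => (i : ℕ) + 1
  have hw : ∀ i, w i ≠ 0 := fun i => Nat.succ_ne_zero i
  obtain ⟨u, ⟨huI, huv⟩, hleast⟩ := (measure (weight w)).wf.has_min
    {u | monomial u (1 : K) ∈ I ∧ u ≤ v} ⟨v, hv, le_rfl⟩
  have hu : u ∈ minGens I := ⟨huI, fun y hyu hne hyI =>
    hleast y ⟨hyI, hyu.trans huv⟩ (weight_lt_weight_of_lt hw (lt_of_le_of_ne hyu hne))⟩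
  refine ⟨u, hu, huv, fun i hi => ?_⟩
  by_contra! hlt
  obtain ⟨j, hj, htop, hij⟩ := exists_top_of_lt_maxIdx hlt
  have hvi : u i < v i := by
    have := mem_support_iff.mp hi
    rw [tsub_apply] at this
    omega
  have hweight : weight w (u - single j 1 + single i 1) < weight w u := by
    rw [← weight_sub_single_add (mem_support_iff.mp hj), map_add, weight_single]
    simp only [smul_eq_mul, one_mul, w, add_lt_add_iff_left, add_lt_add_iff_right]
    exact hij
  exact hleast _ ⟨hst u hu j hj htop i hij, sub_single_add_single_le hij.ne huv hvi⟩ hweight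

lemma le_of_add_eq_add {u₁ w₁ u₂ w₂ : Fin n →₀ ℕ} (h : u₁ + w₁ = u₂ + w₂)
    (h₂ : ∀ i ∈ w₂.support, maxIdx u₂ ≤ (i : ℕ) + 1) (hmax : maxIdx u₁ ≤ maxIdx u₂)
    (htop : ∀ j : Fin n, (j : ℕ) + 1 = maxIdx u₂ → u₁ j ≤ u₂ j) : u₁ ≤ u₂ := by
  intro j
  have hj : u₁ j + w₁ j = u₂ j + w₂ j := by simpa using DFunLike.congr_fun h j
  rcases lt_trichotomy ((j : ℕ) + 1) (maxIdx u₂) with hlt | heq | hgt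
  · have : w₂ j = 0 := by
      by_contra hw
      have := h₂ j (mem_support_iff.mpr hw)
      omega
    omega
  · exact htop j heq
  · simp [apply_eq_zero_of_maxIdx_lt (hmax.trans_lt hgt)]

lemma le_total_of_add_eq_add {u₁ w₁ u₂ w₂ : Fin n →₀ ℕ} (h : u₁ + w₁ = u₂ + w₂)
    (h₁ : ∀ i ∈ w₁.support, maxIdx u₁ ≤ (i : ℕ) + 1)
    (h₂ : ∀ i ∈ w₂.support, maxIdx u₂ ≤ (i : ℕ) + 1) : u₁ ≤ u₂ ∨ u₂ ≤ u₁ := by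
  wlog hmax : maxIdx u₁ ≤ maxIdx u₂ generalizing u₁ w₁ u₂ w₂
  · exact (this h.symm h₂ h₁ (le_of_not_ge hmax)).symm
  by_cases htop : ∀ j : Fin n, (j : ℕ) + 1 = maxIdx u₂ → u₁ j ≤ u₂ j
  · exact Or.inl (le_of_add_eq_add h h₂ hmax htop)
  obtain ⟨j, hj, hlt⟩ : ∃ j : Fin n, (j : ℕ) + 1 = maxIdx u₂ ∧ u₂ j < u₁ j := by
    simpa using htop
  have hmax' : maxIdx u₂ ≤ maxIdx u₁ := by
    by_contra! hgt
    have := apply_eq_zero_of_maxIdx_lt (hgt.trans_eq hj.symm)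
    omega
  refine Or.inr (le_of_add_eq_add h.symm h₁ hmax' fun k hk => ?_)
  obtain rfl : k = j := Fin.ext (by omega)
  exact hlt.le

theorem stmt5_general {K : Type*} [Field K] {n : ℕ} (I : Ideal (MvPolynomial (Fin n) K))
    (hst : IsStable I) :
    ∀ v : Fin n →₀ ℕ, monomial v (1 : K) ∈ I →
      ∃! p : (Fin n →₀ ℕ) × (Fin n →₀ ℕ), p.1 ∈ minGens I ∧ v = p.1 + p.2 ∧
        ∀ i ∈ p.2.support, maxIdx p.1 ≤ (i : ℕ) + 1 := by
  intro v hv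
  obtain ⟨u, hu, huv, hfactor⟩ := exists_minGens_factor_of_isStable hst hv
  refine ⟨(u, v - u), ⟨hu, (add_tsub_cancel_of_le huv).symm, hfactor⟩, ?_⟩
  rintro ⟨u', w'⟩ ⟨hu', rfl, hfactor'⟩
  have hsum : u' + w' = u + (u' + w' - u) := (add_tsub_cancel_of_le huv).symm
  have heq : u' = u := (le_total_of_add_eq_add hsum hfactor' hfactor).elim
    (eq_of_le_of_mem_minGens hu' hu) fun h => (eq_of_le_of_mem_minGens hu hu' h).symm
  subst heq
  simp

/-- Eliahou–Kervaire decomposition: every monomial of a stable monomial ideal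
factors uniquely as `u ⋅ w` with `u` a minimal generator and `w ∈ K[x_{m(u)},…,x_n]`. -/
theorem stmt5 {K : Type*} [Field K] {n : ℕ} (I : Ideal (MvPolynomial (Fin n) K))
    (hmon : IsMonomialIdeal I) (hst : IsStable I) :
    ∀ v : Fin n →₀ ℕ, monomial v (1 : K) ∈ I →
      ∃! p : (Fin n →₀ ℕ) × (Fin n →₀ ℕ), p.1 ∈ minGens I ∧ v = p.1 + p.2 ∧
        ∀ i ∈ p.2.support, maxIdx p.1 ≤ (i : ℕ) + 1 :=
  stmt5_general I hst
end
end

section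
/- Let a_d ≥ ... ≥ a_1 ≥ -1 and b_d ≥ ... ≥ b_1 ≥ -1 be integers. Then C(a_d + d, d) + ... + C(a_1 + 1, 1) > C(b_d + d, d) + ... + C(b_1 + 1, 1) if and only if (a_d,...,a_1) is lexicographically greater than (b_d,...,b_1). -/
/-!
For a nondecreasing sequence `b_1 ≤ ⋯ ≤ b_d ≤ m` with `m ≥ -1`, Pascal's rule telescopes to
`C(b_d + d, d) + ⋯ + C(b_1 + 1, 1) < C(m + d + 1, d)`. Hence if the top coordinates agree down
to some `i` and `b_i < a_i`, the `i`-th term `C(a_i + i, i) ≥ C(b_i + 1 + i, i)` of the `a`-sum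
alone exceeds the whole lower part of the `b`-sum; induction on `d` from the top coordinate
finishes.
-/

open MvPolynomial

noncomputable section

variable {K : Type*} [Field K] {n : ℕ}

lemma zchoose_le_zchoose {x y : ℤ} (h : x ≤ y) (k : ℕ) : zchoose x k ≤ zchoose y k := by
  unfold zchoose
  split_ifs with hx hy
  · exact Nat.choose_le_choose k (Int.toNat_le_toNat h)
  · omega
  all_goals simp

lemma zchoose_succ_succ (x : ℤ) (k : ℕ) :
    zchoose (x + 1) (k + 1) = zchoose x k + zchoose x (k + 1) := by
  unfold zchoose
  rcases lt_trichotomy x (-1) with hx | rfl | hx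
  · simp [show ¬ 0 ≤ x + 1 by omega, show ¬ 0 ≤ x by omega]
  · simp
  · rw [if_pos (by omega), if_pos (by omega), if_pos (by omega),
      show (x + 1).toNat = x.toNat + 1 by omega, Nat.choose_succ_succ']

lemma zchoose_zero {x : ℤ} (hx : 0 ≤ x) : zchoose x 0 = 1 := by
  simp [zchoose, hx]

/-- `macaulaySum a = C(a_d + d, d) + ⋯ + C(a_1 + 1, 1)`, with `a i` standing for `a_{i+1}`. -/
def macaulaySum {d : ℕ} (a : Fin d → ℤ) : ℕ :=
  ∑ i : Fin d, zchoose (a i + ((i : ℕ) + 1)) ((i : ℕ) + 1)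

lemma macaulaySum_castSucc {d : ℕ} (a : Fin (d + 1) → ℤ) :
    macaulaySum a =
      macaulaySum (fun i : Fin d => a i.castSucc) + zchoose (a (Fin.last d) + (d + 1)) (d + 1) := by
  simp [macaulaySum, Fin.sum_univ_castSucc]

lemma macaulaySum_lt_zchoose {d : ℕ} {b : Fin d → ℤ} (hb : Monotone b) {m : ℤ}
    (hbm : ∀ i, b i ≤ m) (hm : -1 ≤ m) : macaulaySum b < zchoose (m + d + 1) d := by
  induction d generalizing m with
  | zero => simp [macaulaySum, zchoose_zero (show 0 ≤ m + 1 by omega)]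
  | succ d ih =>
    set m' := max (b (Fin.last d)) (-1)
    have hinit : macaulaySum (fun i : Fin d => b i.castSucc) < zchoose (m' + d + 1) d :=
      ih (hb.comp Fin.strictMono_castSucc.monotone)
        (fun i => (hb (Fin.le_last _)).trans (le_max_left _ _)) (le_max_right _ _)
    have hlast : zchoose (b (Fin.last d) + (d + 1)) (d + 1) ≤ zchoose (m' + d + 1) (d + 1) :=
      zchoose_le_zchoose (by omega) _
    calc macaulaySum b
        < zchoose (m' + d + 1) d + zchoose (m' + d + 1) (d + 1) := by
          rw [macaulaySum_castSucc]; omega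
      _ = zchoose (m' + d + 1 + 1) (d + 1) := (zchoose_succ_succ _ _).symm
      _ ≤ zchoose (m + (d + 1 : ℕ) + 1) (d + 1) :=
          zchoose_le_zchoose (by have := hbm (Fin.last d); push_cast; omega) _

lemma macaulaySum_lt_of_last_lt {d : ℕ} {a b : Fin (d + 1) → ℤ} (hb : Monotone b)
    (hb_last : -1 ≤ b (Fin.last d)) (hlt : b (Fin.last d) < a (Fin.last d)) :
    macaulaySum b < macaulaySum a :=
  calc macaulaySum b < zchoose (b (Fin.last d) + (d + 1 : ℕ) + 1) (d + 1) :=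
        macaulaySum_lt_zchoose hb (fun i => hb (Fin.le_last i)) hb_last
    _ ≤ zchoose (a (Fin.last d) + (d + 1)) (d + 1) := zchoose_le_zchoose (by push_cast; omega) _
    _ ≤ macaulaySum a := by rw [macaulaySum_castSucc a]; omega

lemma exists_lt_and_eq_above_iff_of_last_eq {d : ℕ} {a b : Fin (d + 1) → ℤ}
    (h : a (Fin.last d) = b (Fin.last d)) :
    (∃ i, b i < a i ∧ ∀ j, i < j → a j = b j) ↔
      ∃ i : Fin d, b i.castSucc < a i.castSucc ∧
        ∀ j : Fin d, i < j → a j.castSucc = b j.castSucc := by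
  simp [Fin.exists_fin_succ', Fin.forall_fin_succ', h]

lemma not_exists_lt_and_eq_above_of_last_lt {d : ℕ} {a b : Fin (d + 1) → ℤ}
    (h : a (Fin.last d) < b (Fin.last d)) :
    ¬ ∃ i, b i < a i ∧ ∀ j, i < j → a j = b j := by
  rintro ⟨i, hi, habove⟩
  rcases (Fin.le_last i).lt_or_eq with hlt | rfl
  · exact h.ne (habove _ hlt)
  · exact h.not_gt hi

theorem macaulaySum_lt_iff {d : ℕ} {a b : Fin d → ℤ} (ha : Monotone a) (hb : Monotone b)
    (ha₁ : ∀ i, -1 ≤ a i) (hb₁ : ∀ i, -1 ≤ b i) :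
    macaulaySum b < macaulaySum a ↔ ∃ i, b i < a i ∧ ∀ j, i < j → a j = b j := by
  induction d with
  | zero => simp [macaulaySum]
  | succ d ih =>
    rcases lt_trichotomy (a (Fin.last d)) (b (Fin.last d)) with hlt | heq | hgt
    · exact iff_of_false (macaulaySum_lt_of_last_lt ha (ha₁ _) hlt).le.not_gt
        (not_exists_lt_and_eq_above_of_last_lt hlt)
    · rw [exists_lt_and_eq_above_iff_of_last_eq heq, macaulaySum_castSucc a,
        macaulaySum_castSucc b, heq, add_lt_add_iff_right]
      exact ih (ha.comp Fin.strictMono_castSucc.monotone) (hb.comp Fin.strictMono_castSucc.monotone)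
        (fun _ => ha₁ _) (fun _ => hb₁ _)
    · exact iff_of_true (macaulaySum_lt_of_last_lt hb (hb₁ _) hgt)
        ⟨Fin.last d, hgt, fun j hj => absurd hj (Fin.le_last _).not_gt⟩

/-- Lemma 4.1: comparison of sums of binomial coefficients is lexicographic
comparison of the coefficient sequences. -/
theorem stmt10 {d : ℕ} (a b : Fin d → ℤ) (hma : Monotone a) (hmb : Monotone b)
    (ha : ∀ i, -1 ≤ a i) (hb : ∀ i, -1 ≤ b i) :
    (∑ i : Fin d, zchoose (a i + ((i : ℕ) + 1)) ((i : ℕ) + 1)) >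
      (∑ i : Fin d, zchoose (b i + ((i : ℕ) + 1)) ((i : ℕ) + 1)) ↔
    ∃ i, b i < a i ∧ ∀ j, i < j → a j = b j :=
  macaulaySum_lt_iff hma hmb ha hb
end
end

section
/- Let 0 = a_0 < a_1 ≤ ... ≤ a_n ≤ d be integers, a = Σ_{j=1}^{n} C(d - a_j + n - j, n - j), and s = min{k ≤ n-1 : a_k = a_{n-1}}. Then a = Σ_{j=1}^{s-1} C(d - a_j + n - j, n - j) + C(d - (a_s - 1) + n - s, n - s), and this expression is the (n-1)-st Macaulay representation of a. -/
open MvPolynomial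

noncomputable section

variable {K : Type*} [Field K] {n : ℕ}

/-! For `j ≥ s` all `a j` equal `a s` (the term `j = n` is `1` whatever `a n` is), so by the
hockey-stick identity the tail `j ≥ s` of the sum collapses to `C(d - a_s + 1 + n - s, n - s)`.
Because `a_{s-1} < a_s`, the upper parameters `d - a_s + 1, d - a_{s-1}, …, d - a_1` still
increase with the lower index `n - j`, which is exactly the Macaulay condition. -/

open Finset

theorem Finset.sum_Icc_reflect {M : Type*} [AddCommMonoid M] (f : ℕ → M) {p q n : ℕ}
    (hp : p ≤ n) (hq : q ≤ n) :
    ∑ j ∈ Icc p q, f (n - j) = ∑ m ∈ Icc (n - q) (n - p), f m := by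
  refine sum_nbij' (fun j => n - j) (fun m => n - m) ?_ ?_ ?_ ?_ ?_ <;>
    intro x hx <;> simp only [mem_Icc] at hx ⊢ <;> omega

theorem Nat.sum_Icc_choose_add_tsub (x : ℕ) {s n : ℕ} (h : s ≤ n) :
    ∑ j ∈ Icc s n, (x + (n - j)).choose (n - j) = (x + 1 + (n - s)).choose (n - s) := by
  have hsymm (m : ℕ) : (x + m).choose m = (m + x).choose x := by
    rw [← Nat.choose_symm_add, add_comm]
  rw [sum_Icc_reflect (fun m => (x + m).choose m) h le_rfl, Nat.sub_self,
    ← Nat.range_succ_eq_Icc_zero]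
  simp only [hsymm, Nat.sum_range_add_choose]
  rw [← Nat.choose_symm_add]
  congr 1
  omega

theorem MonotoneOn.apply_eq_of_sInf_le {β : Type*} [PartialOrder β] {f : ℕ → β} {N j : ℕ}
    (hf : MonotoneOn f (Set.Iic N)) (hj : sInf {k | f k = f N} ≤ j) (hjN : j ≤ N) :
    f j = f N := by
  have hmem : f (sInf {k | f k = f N}) = f N := Nat.sInf_mem (s := {k | f k = f N}) ⟨N, rfl⟩
  refine le_antisymm (hf hjN (Set.mem_Iic.2 le_rfl) hjN) ?_
  exact hmem ▸ hf (le_trans hj hjN) hjN hj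

theorem MonotoneOn.apply_pred_sInf_lt {β : Type*} [PartialOrder β] {f : ℕ → β} {N : ℕ}
    (hf : MonotoneOn f (Set.Iic N)) (hpos : 0 < sInf {k | f k = f N}) :
    f (sInf {k | f k = f N} - 1) < f (sInf {k | f k = f N}) := by
  set s := sInf {k | f k = f N}
  have hsN : s ≤ N := Nat.sInf_le rfl
  have hne : f (s - 1) ≠ f N := Nat.notMem_of_lt_sInf (s := {k | f k = f N}) (by omega)
  rw [show f s = f N from Nat.sInf_mem (s := {k | f k = f N}) ⟨N, rfl⟩]
  exact lt_of_le_of_ne (hf (Set.mem_Iic.2 (by omega)) (Set.mem_Iic.2 le_rfl) (by omega)) hne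

section CriticalSum

variable {a : ℕ → ℕ} {n d s : ℕ}

theorem sum_Icc_choose_eq_add_choose_of_const (hs : 1 ≤ s) (hsn : s ≤ n)
    (hconst : ∀ j, s ≤ j → j < n → a j = a s) :
    ∑ j ∈ Icc 1 n, (d - a j + (n - j)).choose (n - j) =
      ∑ j ∈ Icc 1 (s - 1), (d - a j + (n - j)).choose (n - j) +
        (d - a s + 1 + (n - s)).choose (n - s) := by
  obtain ⟨r, rfl⟩ : ∃ r, s = r + 1 := ⟨s - 1, by omega⟩
  have htail : ∑ j ∈ Icc (r + 1) n, (d - a j + (n - j)).choose (n - j) =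
      ∑ j ∈ Icc (r + 1) n, (d - a (r + 1) + (n - j)).choose (n - j) := by
    refine sum_congr rfl fun j hj => ?_
    rcases (mem_Icc.1 hj).2.lt_or_eq with hjn | rfl
    · rw [hconst j (mem_Icc.1 hj).1 hjn]
    · simp
  rw [Nat.add_sub_cancel, ← Nat.sum_Icc_choose_add_tsub _ hsn, ← htail,
    Icc_add_one_left_eq_Ioc, ← zero_add 1, Icc_add_one_left_eq_Ioc, Icc_add_one_left_eq_Ioc,
    sum_Ioc_consecutive _ (Nat.zero_le r) (by omega)]

theorem isMacaulayRep_sum_choose_of_lt (hs : 1 ≤ s) (hsn : s < n)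
    (hmon : MonotoneOn a (Set.Iic n)) (hjump : a (s - 1) < a s) (hd : a s ≤ d) :
    IsMacaulayRep
      (∑ j ∈ Icc 1 (s - 1), (d - a j + (n - j)).choose (n - j) +
        (d - a s + 1 + (n - s)).choose (n - s))
      (n - 1) (n - s) (fun m => if m = n - s then d - a s + 1 else d - a (n - m)) := by
  refine ⟨by omega, by omega, fun m hm hmn => ?_, ?_⟩
  · dsimp only
    rcases hm.eq_or_lt with rfl | hlt
    · rw [if_pos rfl, if_neg (by omega), show n - (n - s + 1) = s - 1 by omega]
      omega
    · rw [if_neg (by omega), if_neg (by omega)]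
      have := hmon (Set.mem_Iic.2 (by omega)) (Set.mem_Iic.2 (by omega))
        (show n - (m + 1) ≤ n - m by omega)
      omega
  · obtain ⟨r, rfl⟩ : ∃ r, s = r + 1 := ⟨s - 1, by omega⟩
    rw [← sum_Icc_reflect _ (p := 1) (by omega) hsn.le, sum_Icc_succ_top hs,
      Nat.add_sub_cancel]
    dsimp only
    rw [if_pos rfl]
    congr 1
    refine sum_congr rfl fun j hj => ?_
    have hj' := mem_Icc.1 hj
    rw [if_neg (by omega), Nat.sub_sub_self (by omega)]

end CriticalSum

/-- Lemma 4.8: with `0 = a_0 < a_1 ≤ ⋯ ≤ a_n ≤ d`,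
`a = Σ_{j=1}^n C(d - a_j + n - j, n - j)` and `s = min{k ≤ n-1 : a_k = a_{n-1}}`, one has
`a = Σ_{j=1}^{s-1} C(d - a_j + n - j, n - j) + C(d - (a_s - 1) + n - s, n - s)`, and this
is the `(n-1)`-st Macaulay representation of `a`. -/
theorem stmt16 {n d : ℕ} (hn : 2 ≤ n) (a : ℕ → ℕ) (h0 : a 0 = 0)
    (hmono : ∀ j, j < n → a j ≤ a (j + 1)) (hpos : 0 < a 1) (had : a n ≤ d)
    (s : ℕ) (hs : s = sInf {k | a k = a (n - 1)}) :
    (∑ j ∈ Finset.Icc 1 n, Nat.choose (d - a j + (n - j)) (n - j)) =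
      (∑ j ∈ Finset.Icc 1 (s - 1), Nat.choose (d - a j + (n - j)) (n - j)) +
        Nat.choose (d - (a s - 1) + (n - s)) (n - s) ∧
    IsMacaulayRep (∑ j ∈ Finset.Icc 1 n, Nat.choose (d - a j + (n - j)) (n - j))
      (n - 1) (n - s) (fun m => if m = n - s then d - a s + 1 else d - a (n - m)) := by
  have hmon : MonotoneOn a (Set.Iic n) :=
    monotoneOn_of_le_succ Set.ordConnected_Iic fun j _ _ hj => by
      rw [Order.succ_eq_add_one] at hj ⊢
      exact hmono j (Set.mem_Iic.1 hj)
  have hmon' : MonotoneOn a (Set.Iic (n - 1)) := hmon.mono (Set.Iic_subset_Iic.2 (n.sub_le 1))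
  have hsn : s ≤ n - 1 := hs ▸ Nat.sInf_le rfl
  have has : a s = a (n - 1) := hs ▸ Nat.sInf_mem (s := {k | a k = a (n - 1)}) ⟨n - 1, rfl⟩
  have hs1 : 1 ≤ s := Nat.pos_of_ne_zero fun hs0 => by
    have := hmon' (Set.mem_Iic.2 (by omega)) (Set.mem_Iic.2 le_rfl) (by omega : 1 ≤ n - 1)
    rw [hs0, h0] at has
    omega
  have hjump : a (s - 1) < a s := hs ▸ hmon'.apply_pred_sInf_lt (hs ▸ hs1)
  have hconst (j : ℕ) (hsj : s ≤ j) (hjn : j < n) : a j = a s :=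
    has ▸ hmon'.apply_eq_of_sInf_le (hs ▸ hsj) (by omega)
  have hd : a s ≤ d := (hmon (Set.mem_Iic.2 (by omega)) (Set.mem_Iic.2 le_rfl) (by omega)).trans had
  rw [sum_Icc_choose_eq_add_choose_of_const hs1 (by omega) hconst,
    show d - (a s - 1) = d - a s + 1 by omega]
  exact ⟨rfl, isMacaulayRep_sum_choose_of_lt hs1 (by omega) hmon hjump hd⟩
end
end
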